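/- A permutation group G on [n] is primitive if and only if G is sync-maximal, where G is sync-maximal means: for every transformation f : [n] → [n] of rank n−1, (1) for every subset S ⊆ [n] with |S| ≥ 2 there exists h in the monoid M generated by G ∪ {f} with h([n]) = S, and (2) for every two distinct subsets S, T ⊆ [n] each of size at least 2, there exists h ∈ M such that exactly one of h(S), h(T) is a singleton. -/

import Mathlib

/-!
A map `f` of rank `n - 1` glues one point `a` to another and misses one point `c`. For primitive
`G`, distinct `p, q` and a nonempty proper `S`, some `g ∈ G` has `g q ∈ S` but `g p ∉ S`;
otherwise "lying on the same side of every translate of `S`" would be a `G`-congruence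
identifying `p` and `q`. With `g (f a) ∈ S ∌ g c`, the preimage of `S` under `g ∘ f` has one
point more than `S`, so downward induction writes every nonempty `S` as an image of `M`. With
`g c ∈ P ∌ g (f a)` instead, precomposing `g ∘ f` shrinks by one the class `P` of a map with
kernel `{P, Pᶜ}`; starting from a map of rank two this yields, for every `x`, a map with kernel
`{{x}, {x}ᶜ}`, and such maps separate any two distinct sets of size at least two.

Conversely, if `Δ` is a nontrivial block, let `f` send `a ∈ Δ` to `b ∈ Δ` and fix all other
points. Then no element of `M` glues points that are not in a common translate of `Δ`, but `f`
composed with a map of image `{a, b}` is constant.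
-/

open Finset

/-- The set of functions on `Fin n` arising from elements of the permutation group `G`. -/
def permSet {n : ℕ} (G : Subgroup (Equiv.Perm (Fin n))) : Set (Function.End (Fin n)) :=
  {h | ∃ g ∈ G, h = ⇑g}

/-- The transformation monoid generated by `G ∪ {f}`. -/
def genMon {n : ℕ} (G : Subgroup (Equiv.Perm (Fin n))) (f : Fin n → Fin n) :
    Submonoid (Function.End (Fin n)) :=
  Submonoid.closure (permSet G ∪ {f})

/-- A permutation group is primitive if no subset `Δ` with `1 < |Δ| < n` is a block. -/
def IsPrimitive' {n : ℕ} (G : Subgroup (Equiv.Perm (Fin n))) : Prop :=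
  ¬ ∃ Δ : Finset (Fin n), 1 < Δ.card ∧ Δ.card < n ∧
      ∀ g ∈ G, Δ.image ⇑g = Δ ∨ Disjoint (Δ.image ⇑g) Δ

section Transformations

variable {α : Type*}

/-- The shape of a map of rank `|α| - 1`: it glues `a` to another point and misses `c`. -/
structure IsCollapse (f : α → α) (a c : α) : Prop where
  apply_ne : f a ≠ c
  bijOn : Set.BijOn f {a}ᶜ {c}ᶜ

theorem exists_isCollapse [Fintype α] [DecidableEq α] {f : α → α}
    (hf : #(univ.image f) + 1 = Fintype.card α) : ∃ a c, IsCollapse f a c := by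
  obtain ⟨c, -, hc⟩ := exists_mem_notMem_of_card_lt_card (s := univ.image f) (t := univ)
    (by rw [card_univ]; omega)
  obtain ⟨a, -, b, -, hab, hfab⟩ := exists_ne_map_eq_of_card_lt_of_maps_to
    (s := univ) (t := univ.image f) (f := f) (by rw [card_univ]; omega) (fun x _ => by simp)
  have himage : univ.image f = univ.erase c :=
    eq_of_subset_of_card_le (fun y hy => mem_erase.2 ⟨ne_of_mem_of_not_mem hy hc, mem_univ y⟩)
      (by rw [card_erase_of_mem (mem_univ c), card_univ]; omega)
  have himage_erase : (univ.erase a).image f = univ.erase c := by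
    refine himage ▸ (image_subset_image (erase_subset a univ)).antisymm fun y hy => ?_
    obtain ⟨x, -, rfl⟩ := mem_image.1 hy
    by_cases hxa : x = a
    · exact mem_image.2 ⟨b, mem_erase.2 ⟨hab.symm, mem_univ b⟩, by rw [hxa, hfab]⟩
    · exact mem_image_of_mem f (mem_erase.2 ⟨hxa, mem_univ x⟩)
  have hinj : Set.InjOn f ↑(univ.erase a) := injOn_of_card_image_eq <| by
    rw [himage_erase, card_erase_of_mem (mem_univ _), card_erase_of_mem (mem_univ _)]
  have hbij := hinj.bijOn_image
  rw [← coe_image, himage_erase] at hbij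
  exact ⟨a, c, fun h => hc (h ▸ mem_image_of_mem f (mem_univ a)),
    by simpa [← Set.compl_eq_univ_sdiff] using hbij⟩

theorem card_image_update_id [Fintype α] [DecidableEq α] {a b : α} (hab : a ≠ b) :
    #(univ.image (Function.update id a b)) = Fintype.card α - 1 := by
  have : univ.image (Function.update id a b) = univ.erase a := by
    ext y
    simp only [mem_image, mem_univ, true_and, mem_erase, and_true, Function.update_apply, id]
    constructor
    · rintro ⟨x, rfl⟩
      split_ifs with hxa
      exacts [hab.symm, hxa]
    · exact fun hya => ⟨y, if_neg hya⟩
  rw [this, card_erase_of_mem (mem_univ a), card_univ]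

namespace IsCollapse

variable {f : α → α} {a c : α}

theorem perm_comp (hf : IsCollapse f a c) (g : Equiv.Perm α) :
    IsCollapse (fun x => g (f x)) a (g c) where
  apply_ne := g.injective.ne hf.apply_ne
  bijOn := by
    have hg : Set.BijOn g {c}ᶜ {g c}ᶜ := by
      simpa [Set.image_compl_eq g.bijective] using g.injective.injOn.bijOn_image (s := {c}ᶜ)
    exact hg.comp hf.bijOn

theorem card_filter_erase [Fintype α] [DecidableEq α] (hf : IsCollapse f a c) (S : Finset α) :
    #((univ.filter (f · ∈ S)).erase a) = #(S.erase c) := by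
  refine card_nbij f (fun x hx => ?_) (hf.bijOn.injOn.mono fun x hx => ?_) fun y hy => ?_
  · simp only [coe_erase, coe_filter, mem_univ, true_and, Set.mem_sdiff, Set.mem_ofPred_eq,
      Set.mem_singleton_iff] at hx
    exact mem_erase.2 ⟨hf.bijOn.mapsTo hx.2, hx.1⟩
  · exact (mem_erase.1 hx).1
  · obtain ⟨hyc, hyS⟩ := mem_erase.1 hy
    obtain ⟨x, hxa, rfl⟩ := hf.bijOn.surjOn hyc
    exact ⟨x, by simpa [hyS] using hxa, rfl⟩

theorem image_filter_mem [Fintype α] [DecidableEq α] (hf : IsCollapse f a c) {S : Finset α}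
    (hcS : c ∉ S) : (univ.filter (f · ∈ S)).image f = S := by
  refine (image_subset_iff.2 fun x hx => (mem_filter.1 hx).2).antisymm fun y hy => ?_
  obtain ⟨x, -, rfl⟩ := hf.bijOn.surjOn (ne_of_mem_of_not_mem hy hcS)
  exact mem_image_of_mem f (mem_filter.2 ⟨mem_univ x, hy⟩)

end IsCollapse

/-- The kernel of `h` is the partition `{P, Pᶜ}`. -/
def HasKernel {β : Type*} (h : α → β) (P : Finset α) : Prop :=
  ∀ y z, h y = h z ↔ (y ∈ P ↔ z ∈ P)

namespace HasKernel

variable {β : Type*} {h : α → β} {P : Finset α}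

theorem comp [Fintype α] [DecidableEq α] (hh : HasKernel h P) (φ : α → α) :
    HasKernel (h ∘ φ) (univ.filter (φ · ∈ P)) := by
  simpa [HasKernel] using fun y z => hh (φ y) (φ z)

theorem card_image_eq_one [DecidableEq β] {x : α} (hh : HasKernel h {x}) {S : Finset α}
    (hS : S.Nonempty) (hxS : x ∉ S) : #(S.image h) = 1 := by
  obtain ⟨s, hs⟩ := hS
  have hconst : Set.EqOn h (fun _ => h s) S := fun y hy =>
    (hh y s).2 (by simp [ne_of_mem_of_not_mem hy hxS, ne_of_mem_of_not_mem hs hxS])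
  rw [image_congr hconst, image_const ⟨s, hs⟩, card_singleton]

theorem one_lt_card_image [DecidableEq β] {x : α} (hh : HasKernel h {x}) {T : Finset α}
    (hT : 1 < #T) (hxT : x ∈ T) : 1 < #(T.image h) := by
  obtain ⟨t, htT, htx⟩ := exists_mem_ne hT x
  exact one_lt_card.2 ⟨h x, mem_image_of_mem h hxT, h t, mem_image_of_mem h htT,
    fun hxt => htx (by simpa using (hh x t).1 hxt)⟩

end HasKernel

theorem exists_hasKernel_of_image_eq_pair [Fintype α] {β : Type*} [DecidableEq β] {h : α → β}
    {u v : β} (himage : univ.image h = {u, v}) (huv : u ≠ v) :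
    ∃ P : Finset α, HasKernel h P ∧ P.Nonempty ∧ P ≠ univ := by
  have hval : ∀ y, h y = u ∨ h y = v := fun y => by
    simpa [himage] using mem_image_of_mem h (mem_univ y)
  obtain ⟨y, -, hy⟩ := mem_image.1 (himage ▸ mem_insert_self u {v})
  obtain ⟨z, -, hz⟩ := mem_image.1 (himage ▸ mem_insert_of_mem (mem_singleton_self v))
  refine ⟨univ.filter (h · = u), fun y z => ?_, ⟨y, by simpa using hy⟩,
    fun hP => huv (hz ▸ (mem_filter.1 (hP ▸ mem_univ z)).2.symm)⟩
  rcases hval y with hy | hy <;> rcases hval z with hz | hz <;> simp [hy, hz, huv, huv.symm]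

theorem exists_xor_card_image_eq_one [DecidableEq α] {M : Submonoid (Function.End α)}
    (hM : ∀ x, ∃ h ∈ M, HasKernel h {x}) {S T : Finset α} (hS : 2 ≤ #S) (hT : 2 ≤ #T)
    (hST : S ≠ T) : ∃ h ∈ M, Xor (#(S.image h) = 1) (#(T.image h) = 1) := by
  have separate : ∀ {S T : Finset α}, 2 ≤ #S → 2 ≤ #T → ∀ x ∈ T, x ∉ S →
      ∃ h ∈ M, #(S.image h) = 1 ∧ ¬ #(T.image h) = 1 := fun hS hT x hxT hxS => by
    obtain ⟨h, hhM, hh⟩ := hM x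
    exact ⟨h, hhM, hh.card_image_eq_one (card_pos.1 (by omega)) hxS,
      (hh.one_lt_card_image (by omega) hxT).ne'⟩
  by_cases hTS : T ⊆ S
  · obtain ⟨x, hxS, hxT⟩ := not_subset.1 fun hST' => hST (hST'.antisymm hTS)
    obtain ⟨h, hhM, hh⟩ := separate hT hS x hxS hxT
    exact ⟨h, hhM, Or.inr hh⟩
  · obtain ⟨x, hxT, hxS⟩ := not_subset.1 hTS
    obtain ⟨h, hhM, hh⟩ := separate hS hT x hxT hxS
    exact ⟨h, hhM, Or.inl hh⟩

theorem apply_mem_of_isBlock [DecidableEq α] {Δ : Finset α} {g : Equiv.Perm α}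
    (hΔ : Δ.image g = Δ ∨ Disjoint (Δ.image g) Δ) {a b : α} (ha : a ∈ Δ) (hb : b ∈ Δ)
    (hga : g a ∈ Δ) : g b ∈ Δ := by
  rcases hΔ with hΔ | hΔ
  · exact hΔ ▸ mem_image_of_mem g hb
  · exact absurd hga (disjoint_left.1 hΔ (mem_image_of_mem g ha))

end Transformations

section PermutationGroups

variable {n : ℕ} {G : Subgroup (Equiv.Perm (Fin n))} {f : Fin n → Fin n}

theorem perm_mem_genMon {g : Equiv.Perm (Fin n)} (hg : g ∈ G) :
    (⇑g : Function.End (Fin n)) ∈ genMon G f :=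
  Submonoid.subset_closure (Or.inl ⟨g, hg, rfl⟩)

theorem self_mem_genMon : (f : Function.End (Fin n)) ∈ genMon G f :=
  Submonoid.subset_closure (Or.inr rfl)

theorem perm_comp_self_mem_genMon {g : Equiv.Perm (Fin n)} (hg : g ∈ G) :
    ((fun x => g (f x)) : Function.End (Fin n)) ∈ genMon G f :=
  mul_mem (perm_mem_genMon hg) self_mem_genMon

theorem rel_of_mem_genMon {r : Fin n → Fin n → Prop} (hr : Equivalence r)
    (hG : ∀ g ∈ G, ∀ y z, r (g y) (g z) → r y z) (hf : ∀ y, r (f y) y)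
    {m : Function.End (Fin n)} (hm : m ∈ genMon G f) {y z : Fin n} (hyz : r (m y) (m z)) :
    r y z := by
  induction hm using Submonoid.closure_induction generalizing y z with
  | mem m hm =>
    rcases hm with ⟨g, hg, rfl⟩ | rfl
    · exact hG g hg y z hyz
    · exact hr.trans (hr.symm (hf y)) (hr.trans hyz (hf z))
  | one => exact hyz
  | mul m₁ m₂ _ _ ih₁ ih₂ => exact ih₂ (ih₁ hyz)

/-- The coarsest `G`-invariant equivalence relation of which `S` is a union of classes. -/
def SameSide (G : Subgroup (Equiv.Perm (Fin n))) (S : Finset (Fin n)) (y z : Fin n) : Prop :=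
  ∀ g ∈ G, (g y ∈ S ↔ g z ∈ S)

theorem sameSide_equivalence {S : Finset (Fin n)} : Equivalence (SameSide G S) :=
  ⟨fun _ _ _ => Iff.rfl, fun h g hg => (h g hg).symm,
    fun h₁ h₂ g hg => (h₁ g hg).trans (h₂ g hg)⟩

theorem sameSide_apply_iff {S : Finset (Fin n)} {g : Equiv.Perm (Fin n)} (hg : g ∈ G)
    {y z : Fin n} : SameSide G S (g y) (g z) ↔ SameSide G S y z :=
  ⟨fun h k hk => by simpa using h (k * g⁻¹) (G.mul_mem hk (G.inv_mem hg)),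
    fun h k hk => h (k * g) (G.mul_mem hk hg)⟩

namespace IsPrimitive'

/-- The class of `p` is a block. -/
theorem forall_of_invariant (hprim : IsPrimitive' G) {r : Fin n → Fin n → Prop}
    (hr : Equivalence r) (hinv : ∀ g ∈ G, ∀ y z, r y z → r (g y) (g z)) {p q : Fin n}
    (hpq : p ≠ q) (hrpq : r p q) (y z : Fin n) : r y z := by
  classical
  let B := univ.filter (r p)
  have hblock : ∀ g ∈ G, B.image g = B ∨ Disjoint (B.image g) B := by
    intro g hg
    by_cases hgp : r p (g p)
    · refine Or.inl (eq_of_subset_of_card_le (fun w hw => ?_)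
        (card_image_of_injective _ g.injective).ge)
      obtain ⟨x, hx, rfl⟩ := mem_image.1 hw
      simp only [B, mem_filter, mem_univ, true_and] at hx ⊢
      exact hr.trans hgp (hinv g hg _ _ hx)
    · refine Or.inr (disjoint_left.2 fun w hw hwB => hgp ?_)
      obtain ⟨x, hx, rfl⟩ := mem_image.1 hw
      simp only [B, mem_filter, mem_univ, true_and] at hx hwB
      exact hr.trans hwB (hr.symm (hinv g hg _ _ hx))
  have hB : B = univ := by
    by_contra hBu
    refine hprim ⟨B, one_lt_card.2 ⟨p, ?_, q, ?_, hpq⟩, ?_, hblock⟩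
    · simpa [B] using hr.refl p
    · simpa [B] using hrpq
    · simpa using (card_lt_iff_ne_univ B).2 hBu
  have hmem : ∀ x, r p x := fun x => by simpa [B] using (hB ▸ mem_univ x : x ∈ B)
  exact hr.trans (hr.symm (hmem y)) (hmem z)

theorem exists_apply_eq (hprim : IsPrimitive' G) (hn : 3 ≤ n) (x y : Fin n) :
    ∃ g ∈ G, g x = y := by
  classical
  have hr : Equivalence fun x y : Fin n => ∃ g ∈ G, g x = y :=
    ⟨fun x => ⟨1, G.one_mem, rfl⟩, fun ⟨g, hg, hgx⟩ => ⟨g⁻¹, G.inv_mem hg, by simp [← hgx]⟩,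
      fun ⟨g, hg, hgx⟩ ⟨k, hk, hky⟩ => ⟨k * g, G.mul_mem hk hg, by simp [hgx, hky]⟩⟩
  by_cases hmove : ∃ g ∈ G, ∃ p, g p ≠ p
  · obtain ⟨g, hg, p, hgp⟩ := hmove
    refine hprim.forall_of_invariant hr (fun k hk y z ⟨g, hg, hgy⟩ => ?_) hgp.symm ⟨g, hg, rfl⟩ x y
    exact ⟨k * g * k⁻¹, G.mul_mem (G.mul_mem hk hg) (G.inv_mem hk), by simp [hgy]⟩
  · push Not at hmove
    obtain ⟨Δ, -, hΔ⟩ := exists_subset_card_eq (show 2 ≤ #(univ : Finset (Fin n)) by simp; omega)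
    refine (hprim ⟨Δ, by omega, by omega, fun g hg => Or.inl ?_⟩).elim
    rw [show ⇑g = id from funext (hmove g hg), image_id]

/-- Otherwise `p` and `q` would be `SameSide`-related. The orientation comes from counting:
`g ↦ g * t⁻¹`, where `t p = q`, injects `{g | g p ∈ S}` into `{g | g q ∈ S}`. -/
theorem exists_apply_mem_apply_not_mem (hprim : IsPrimitive' G) (hn : 3 ≤ n) {p q : Fin n}
    (hpq : p ≠ q) {S : Finset (Fin n)} (hS : S.Nonempty) (hSu : S ≠ univ) :
    ∃ g ∈ G, g q ∈ S ∧ g p ∉ S := by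
  classical
  by_contra! hqp
  obtain ⟨t, ht, rfl⟩ := hprim.exists_apply_eq hn p q
  have hpq' : ∀ g ∈ G, g p ∈ S → g (t p) ∈ S := by
    set A := univ.filter fun g : Equiv.Perm (Fin n) => g ∈ G ∧ g (t p) ∈ S
    set B := univ.filter fun g : Equiv.Perm (Fin n) => g ∈ G ∧ g p ∈ S
    have hAB : A = B := by
      refine eq_of_subset_of_card_le (fun g hg => ?_) (card_le_card_of_injOn (· * t⁻¹)
        (fun g hg => ?_) (mul_left_injective _).injOn)
      · simp only [A, B, mem_filter, mem_univ, true_and] at hg ⊢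
        exact ⟨hg.1, hqp g hg.1 hg.2⟩
      · simp only [A, B, coe_filter, mem_univ, true_and, Set.mem_ofPred_eq] at hg ⊢
        simpa using ⟨G.mul_mem hg.1 (G.inv_mem ht), hg.2⟩
    intro g hg hgp
    have hgA : g ∈ A := hAB ▸ (by simp [B, hg, hgp])
    exact (mem_filter.1 hgA).2.2
  obtain ⟨s, hs⟩ := hS
  obtain ⟨z, hz⟩ := not_forall.1 fun h => hSu (eq_univ_iff_forall.2 h)
  have hside := hprim.forall_of_invariant sameSide_equivalence
    (fun g hg y z => (sameSide_apply_iff hg).2) hpq (fun g hg => ⟨hpq' g hg, hqp g hg⟩) s z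
  exact hz ((hside 1 G.one_mem).1 hs)

variable {a c : Fin n}

theorem exists_image_eq (hprim : IsPrimitive' G) (hn : 3 ≤ n) (hf : IsCollapse f a c)
    (S : Finset (Fin n)) (hS : S.Nonempty) : ∃ h ∈ genMon G f, univ.image h = S := by
  by_cases hSu : S = univ
  · exact ⟨1, one_mem _, hSu ▸ image_id⟩
  obtain ⟨g, hg, hga, hgc⟩ := hprim.exists_apply_mem_apply_not_mem hn hf.apply_ne.symm hS hSu
  have hgf := hf.perm_comp g
  have haT : a ∈ univ.filter fun x => g (f x) ∈ S := by simpa using hga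
  have hT : #(univ.filter fun x => g (f x) ∈ S) = #S + 1 := by
    rw [← card_erase_add_one haT, hgf.card_filter_erase, erase_eq_of_notMem hgc]
  have hSn : #S < n := by simpa using (card_lt_iff_ne_univ S).2 hSu
  obtain ⟨h, hh, hhT⟩ := hprim.exists_image_eq hn hf _ ⟨a, haT⟩
  refine ⟨_, mul_mem (perm_comp_self_mem_genMon hg) hh, ?_⟩
  calc univ.image ((fun x => g (f x)) ∘ h) = (univ.image h).image fun x => g (f x) :=
      image_image.symm
    _ = S := hhT ▸ hgf.image_filter_mem hgc
termination_by n - #S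

theorem exists_hasKernel_singleton_of_hasKernel (hprim : IsPrimitive' G) (hn : 3 ≤ n)
    (hf : IsCollapse f a c) {h : Function.End (Fin n)} (hh : h ∈ genMon G f)
    {P : Finset (Fin n)} (hP : HasKernel h P) (hPne : P.Nonempty) (hPu : P ≠ univ) :
    ∃ h ∈ genMon G f, ∃ x, HasKernel h {x} := by
  by_cases hP1 : #P = 1
  · obtain ⟨x, rfl⟩ := card_eq_one.1 hP1
    exact ⟨h, hh, x, hP⟩
  obtain ⟨g, hg, hgc, hga⟩ := hprim.exists_apply_mem_apply_not_mem hn hf.apply_ne hPne hPu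
  have hgf := hf.perm_comp g
  have haP' : a ∉ univ.filter fun x => g (f x) ∈ P := by simpa using hga
  have hP' : #(univ.filter fun x => g (f x) ∈ P) + 1 = #P := by
    rw [← erase_eq_of_notMem haP', hgf.card_filter_erase, card_erase_add_one hgc]
  have hPpos := hPne.card_pos
  exact hprim.exists_hasKernel_singleton_of_hasKernel hn hf
    (mul_mem hh (perm_comp_self_mem_genMon hg)) (hP.comp fun x => g (f x))
    (card_pos.1 (by omega)) (ne_of_mem_of_not_mem' (mem_univ a) haP').symm
termination_by #P

theorem exists_hasKernel_singleton (hprim : IsPrimitive' G) (hn : 3 ≤ n) (hf : IsCollapse f a c)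
    (x : Fin n) : ∃ h ∈ genMon G f, HasKernel h {x} := by
  obtain ⟨h, hh, himage⟩ := hprim.exists_image_eq hn hf {f a, c} (insert_nonempty _ _)
  obtain ⟨P, hP, hPne, hPu⟩ := exists_hasKernel_of_image_eq_pair himage hf.apply_ne
  obtain ⟨h₀, hh₀, x₀, hx₀⟩ :=
    hprim.exists_hasKernel_singleton_of_hasKernel hn hf hh hP hPne hPu
  obtain ⟨g, hg, rfl⟩ := hprim.exists_apply_eq hn x x₀
  refine ⟨_, mul_mem hh₀ (perm_mem_genMon hg), ?_⟩
  exact (by simpa [filter_eq'] using hx₀.comp g : HasKernel (h₀ ∘ g) {x})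

theorem of_forall_exists_image_eq
    (hG : ∀ f : Fin n → Fin n, #(univ.image f) = n - 1 →
      ∀ S : Finset (Fin n), 2 ≤ #S → ∃ h ∈ genMon G f, univ.image h = S) :
    IsPrimitive' G := by
  rintro ⟨Δ, hΔ₁, hΔn, hblock⟩
  obtain ⟨a, ha, b, hb, hab⟩ := one_lt_card.1 hΔ₁
  set f : Fin n → Fin n := Function.update id a b
  obtain ⟨h, hh, himage⟩ :=
    hG f (by simpa using card_image_update_id hab) {a, b} (card_pair hab).ge
  have hconst : ∀ y, f (h y) = b := fun y => by
    have hy : h y ∈ ({a, b} : Finset (Fin n)) := himage ▸ mem_image_of_mem h (mem_univ y)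
    rcases mem_insert.1 hy with hy | hy <;> simp_all [f, hab.symm]
  have hfside : ∀ y, SameSide G Δ (f y) y := fun y => by
    obtain rfl | hya := eq_or_ne y a
    · simp only [f, Function.update_self]
      exact fun g hg =>
        ⟨apply_mem_of_isBlock (hblock g hg) hb ha, apply_mem_of_isBlock (hblock g hg) ha hb⟩
    · simpa [f, hya] using sameSide_equivalence.refl y
  have hside : ∀ y z, SameSide G Δ y z := fun y z =>
    rel_of_mem_genMon sameSide_equivalence (fun g hg y z => (sameSide_apply_iff hg).1) hfside
      (mul_mem self_mem_genMon hh) (show SameSide G Δ (f (h y)) (f (h z)) by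
        rw [hconst, hconst]; exact sameSide_equivalence.refl b)
  obtain ⟨z, hz⟩ := not_forall.1 fun h => ((card_lt_iff_ne_univ Δ).1 (by simpa using hΔn))
    (eq_univ_iff_forall.2 h)
  exact hz ((hside a z 1 G.one_mem).1 ha)

end IsPrimitive'

end PermutationGroups

theorem primitive_iff_sync_maximal {n : ℕ} (G : Subgroup (Equiv.Perm (Fin n))) :
    IsPrimitive' G ↔
      ∀ f : Fin n → Fin n, (univ.image f).card = n - 1 →
        (∀ S : Finset (Fin n), 2 ≤ S.card →
          ∃ h ∈ genMon G f, univ.image h = S) ∧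
        (∀ S T : Finset (Fin n), 2 ≤ S.card → 2 ≤ T.card → S ≠ T →
          ∃ h ∈ genMon G f,
            Xor' ((S.image h).card = 1) ((T.image h).card = 1)) := by
  refine ⟨fun hprim f hf => ?_, fun h => .of_forall_exists_image_eq fun f hf => (h f hf).1⟩
  rcases lt_or_ge n 3 with hn | hn
  · have huniv : ∀ S : Finset (Fin n), 2 ≤ #S → S = univ := fun S hS =>
      eq_univ_of_card S (by have := card_le_univ S; simp only [Fintype.card_fin] at this ⊢; omega)
    exact ⟨fun S hS => ⟨1, one_mem _, (huniv S hS).symm ▸ image_id⟩,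
      fun S T hS hT hST => absurd ((huniv S hS).trans (huniv T hT).symm) hST⟩
  · obtain ⟨a, c, hc⟩ := exists_isCollapse (f := f) (by simp only [Fintype.card_fin]; omega)
    exact ⟨fun S hS => hprim.exists_image_eq hn hc S (card_pos.1 (by omega)),
      fun S T hS hT hST => exists_xor_card_image_eq_one (hprim.exists_hasKernel_singleton hn hc)
        hS hT hST⟩
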